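/- The map μ_gr satisfies μ_gr(x_i) = 0 for all i = 1,…,n, and for all a, b ∈ lie_n, μ_gr([a,b]) = [μ_gr(a), b] + [a, μ_gr(b)] + Σ_{i=1}^n ( (∂_i b)·x_i·ι(∂_i a) − (∂_i a)·x_i·ι(∂_i b) ) in ass_n. Consequently, the restriction of μ_gr to lie_n is the unique ℚ-linear map lie_n → ass_n vanishing on the generators x_1,…,x_n and satisfying this recursion on all brackets. -/

import Mathlib

noncomputable section

open scoped TensorProduct

attribute [local instance 100] LieRing.ofAssociativeRing

/-- The free unital associative algebra over `ℚ` on `N` generators. -/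
abbrev Ass (N : ℕ) : Type := FreeAlgebra ℚ (Fin N)

/-- The `i`-th generator `x_i`. -/
def gen {N : ℕ} (i : Fin N) : Ass N := FreeAlgebra.ι ℚ i

/-- The monomial (word) associated to a list of generator indices. -/
def wordProd {N : ℕ} (l : List (Fin N)) : Ass N := (l.map gen).prod

/-- Extend a function on words (monomials) to a `ℚ`-linear map on the free algebra,
using the monomial basis. -/
def liftWord {N : ℕ} {A : Type} [AddCommGroup A] [Module ℚ A]
    (f : List (Fin N) → A) : Ass N →ₗ[ℚ] A :=
  (FreeAlgebra.basisFreeMonoid ℚ (Fin N)).constr ℚ fun w => f w.toList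

/-- `μ_gr` on a word. -/
def muWord {N : ℕ} : List (Fin N) → Ass N
  | [] => 0
  | [_] => 0
  | a :: b :: t => (if a = b then -(wordProd (a :: t)) else 0) + gen a * muWord (b :: t)

/-- The linearized self-intersection operation `μ_gr`. -/
def muGr (N : ℕ) : Ass N →ₗ[ℚ] Ass N := liftWord muWord

/-- The antipode: the anti-automorphism `ι` with `ι(x_i) = -x_i`, as a linear map. -/
def iotaMap (N : ℕ) : Ass N →ₗ[ℚ] Ass N :=
  liftWord fun l => ((-1 : ℚ) ^ l.length) • wordProd l.reverse

/-- The (right) partial derivative `∂_i`, characterized on `lie_N` by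
`a = Σ_i (∂_i a) x_i`. -/
def partialD {N : ℕ} (i : Fin N) : Ass N →ₗ[ℚ] Ass N :=
  liftWord fun l =>
    match l.getLast? with
    | some a => if a = i then wordProd l.dropLast else 0
    | none => 0

/-- `η_gr` on a pair of words. -/
def etaWord {N : ℕ} (l r : List (Fin N)) : Ass N :=
  match l.getLast?, r with
  | some a, b :: t => if a = b then -(wordProd (l.dropLast ++ a :: t)) else 0
  | _, _ => 0

/-- The linearized homotopy intersection form `η_gr`. -/
def etaGr (N : ℕ) : Ass N →ₗ[ℚ] Ass N →ₗ[ℚ] Ass N :=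
  liftWord fun l => liftWord fun r => etaWord l r

/-- Degree-`k` homogeneous part of a free algebra (word-length grading). -/
def homogS (X : Type) (k : ℕ) : Submodule ℚ (FreeAlgebra ℚ X) :=
  Submodule.span ℚ {z | ∃ l : List X, l.length = k ∧ z = (l.map (FreeAlgebra.ι ℚ)).prod}

/-- The projection onto the degree-`k` homogeneous component. -/
def homogComp {N : ℕ} (k : ℕ) : Ass N →ₗ[ℚ] Ass N :=
  liftWord fun l => if l.length = k then wordProd l else 0

/-- The free Lie algebra on `x_1, …, x_N`, as the Lie subalgebra of `Ass N`
(with the commutator bracket) generated by the generators. -/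
def lieN (N : ℕ) : LieSubalgebra ℚ (Ass N) :=
  LieSubalgebra.lieSpan ℚ (Ass N) (Set.range (gen (N := N)))

/-- The generator `x_i` as an element of `lie_N`. -/
def genL (N : ℕ) (i : Fin N) : lieN N :=
  ⟨gen i, LieSubalgebra.subset_lieSpan ⟨i, rfl⟩⟩

/-- Substitution: the algebra endomorphism of `ass_2` with `x ↦ p`, `y ↦ q`. -/
def sub2 (p q : Ass 2) : Ass 2 →ₐ[ℚ] Ass 2 := FreeAlgebra.lift ℚ ![p, q]

/-- `x`. -/
def xA : Ass 2 := gen 0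
/-- `y`. -/
def yA : Ass 2 := gen 1

/-- Equation (E1): `φ(y,0) − φ(x+y,0) = 0`. -/
def E1 (φ : Ass 2) : Prop := sub2 yA 0 φ - sub2 (xA + yA) 0 φ = 0

/-- Equation (E2): `(∂_y φ) + (∂_y φ)(y,0) − (∂_y φ)(x+y,0) − R(φ) = 0`,
where `R` is the restriction of `μ_gr` to `lie_2`. -/
def E2 (φ : Ass 2) : Prop :=
  partialD 1 φ + sub2 yA 0 (partialD 1 φ) - sub2 (xA + yA) 0 (partialD 1 φ) - muGr 2 φ = 0

/-- Equation (E3): `[x, φ(y,x)] + [y, φ(x,y)] = 0`. -/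
def E3 (φ : Ass 2) : Prop := ⁅xA, sub2 yA xA φ⁆ + ⁅yA, φ⁆ = 0

/-- `ν^em(φ) = (φ(y,x), φ(x,y))`. -/
def nuEm (φ : Ass 2) : Fin 2 → Ass 2 := ![sub2 yA xA φ, φ]

/-- The space `grt_1^em` of solutions to the linearized emergent equations. -/
def grt1em : Set (Ass 2) := {φ | φ ∈ lieN 2 ∧ E1 φ ∧ E2 φ ∧ E3 φ}

/-- The derivation `ρ(ũ)` on a word. -/
def rhoWord {N : ℕ} (u : Fin N → Ass N) : List (Fin N) → Ass N
  | [] => 0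
  | a :: t => ⁅gen a, u a⁆ * wordProd t + gen a * rhoWord u t

/-- The tangential derivation `ρ(ũ)`, determined by `ρ(ũ)(x_i) = [x_i, u_i]`. -/
def rho {N : ℕ} (u : Fin N → Ass N) : Ass N →ₗ[ℚ] Ass N := liftWord (rhoWord u)

/-- The span of commutators in `ass_N`. -/
def trRel (N : ℕ) : Submodule ℚ (Ass N) :=
  Submodule.span ℚ {z | ∃ a b : Ass N, z = a * b - b * a}

/-- The trace space `tr_N = ass_N/[ass_N, ass_N]`. -/
abbrev Tr (N : ℕ) : Type := Ass N ⧸ trRel N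

/-- The projection `|·| : ass_N → tr_N`. -/
def trM (N : ℕ) : Ass N →ₗ[ℚ] Tr N := (trRel N).mkQ

/-- The divergence `div(ũ) = Σ_i |x_i (∂_i u_i)|`. -/
def divergence {N : ℕ} (u : Fin N → Ass N) : Tr N :=
  ∑ i, trM N (gen i * partialD i (u i))

/-- `ũ ∈ tder_N`: all components lie in `lie_N`. -/
def IsTDer {N : ℕ} (u : Fin N → Ass N) : Prop := ∀ i, u i ∈ lieN N

/-- `ũ ∈ sder_N`. -/
def IsSDer {N : ℕ} (u : Fin N → Ass N) : Prop := IsTDer u ∧ rho u (∑ i, gen i) = 0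

/-- `ũ ∈ krv_N`. -/
def IsKRV {N : ℕ} (u : Fin N → Ass N) : Prop :=
  IsSDer u ∧ ∃ f : Fin (N + 1) → Polynomial ℚ,
    divergence u =
      trM N (Polynomial.aeval (∑ i, gen i) (f 0)) +
        ∑ i : Fin N, trM N (Polynomial.aeval (gen i) (f i.succ))

/-- `ũ ∈ krv_N^0`. -/
def IsKRV0 {N : ℕ} (u : Fin N → Ass N) : Prop :=
  IsSDer u ∧ ∃ cf : Fin N → ℚ, divergence u = ∑ i, cf i • trM N (gen i)

/-- The swap `u(x,y) ↦ u(y,x)`. -/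
def swapA : Ass 2 →ₐ[ℚ] Ass 2 := sub2 yA xA

/-- `ũ ∈ krv_2^sym`. -/
def IsKRVsym (u : Fin 2 → Ass 2) : Prop := IsKRV u ∧ u 1 = swapA (u 0)


/-- The coproduct `Δ` on `ass_N`, with `Δ(x_i) = x_i ⊗ 1 + 1 ⊗ x_i`. -/
def comulA (N : ℕ) : Ass N →ₐ[ℚ] (Ass N ⊗[ℚ] Ass N) :=
  FreeAlgebra.lift ℚ fun i => gen i ⊗ₜ[ℚ] (1 : Ass N) + (1 : Ass N) ⊗ₜ[ℚ] gen i

/-- `μ_{r,gr} = ((|·|∘mult) ⊗ id) ∘ (id ⊗ ((ι ⊗ id) ∘ Δ)) ∘ (id ⊗ μ_gr) ∘ Δ`. -/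
def muR (N : ℕ) : Ass N →ₗ[ℚ] Tr N ⊗[ℚ] Ass N :=
  (TensorProduct.map ((trM N).comp (LinearMap.mul' ℚ (Ass N))) LinearMap.id).comp <|
    ((TensorProduct.assoc ℚ (Ass N) (Ass N) (Ass N)).symm.toLinearMap).comp <|
      (TensorProduct.map LinearMap.id
          ((TensorProduct.map (iotaMap N) LinearMap.id).comp (comulA N).toLinearMap)).comp <|
        (TensorProduct.map LinearMap.id (muGr N)).comp (comulA N).toLinearMap

/-- `Alt(a ⊗ b) = a ⊗ b - b ⊗ a`. -/
def altMap (N : ℕ) : Tr N ⊗[ℚ] Tr N →ₗ[ℚ] Tr N ⊗[ℚ] Tr N :=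
  LinearMap.id - (TensorProduct.comm ℚ (Tr N) (Tr N)).toLinearMap

/-- The linearized Turaev cobracket `δ_gr = Alt ∘ (id ⊗ |·|) ∘ μ_{r,gr}`. -/
def Dgr (N : ℕ) : Ass N →ₗ[ℚ] Tr N ⊗[ℚ] Tr N :=
  (altMap N).comp ((TensorProduct.map LinearMap.id (trM N)).comp (muR N))

/-- Index type of the generators `t_{pq}` (`p ≠ q`) of the Drinfeld–Kohno Lie algebra. -/
def dkGenIdx (N : ℕ) : Type := {pq : Fin N × Fin N // pq.1 ≠ pq.2}

abbrev FLdk (N : ℕ) := FreeLieAlgebra ℚ (dkGenIdx N)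

def tFree {N : ℕ} (p q : Fin N) (h : p ≠ q) : FLdk N := FreeLieAlgebra.of ℚ ⟨(p, q), h⟩

/-- The defining relations of `dk_N`: symmetry, commutation and 4T. -/
def dkRels (N : ℕ) : Set (FLdk N) :=
  {z | ∃ (p q : Fin N) (h : p ≠ q), z = tFree p q h - tFree q p h.symm} ∪
  {z | ∃ (p q r s : Fin N) (hpq : p ≠ q) (hrs : r ≠ s),
      p ≠ r ∧ p ≠ s ∧ q ≠ r ∧ q ≠ s ∧ z = ⁅tFree p q hpq, tFree r s hrs⁆} ∪
  {z | ∃ (p q r : Fin N) (hpq : p ≠ q) (hqr : q ≠ r) (hpr : p ≠ r),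
      z = ⁅tFree p q hpq + tFree q r hqr, tFree p r hpr⁆}

def dkIdeal (N : ℕ) : LieIdeal ℚ (FLdk N) := LieSubmodule.lieSpan ℚ (FLdk N) (dkRels N)

/-- The Drinfeld–Kohno Lie algebra `dk_N`. -/
abbrev dk (N : ℕ) := FLdk N ⧸ dkIdeal N

/-- The generator `t_{pq}` of `dk_N`. -/
def tGen {N : ℕ} (p q : Fin N) (h : p ≠ q) : dk N :=
  LieSubmodule.Quotient.mk (N := dkIdeal N) (tFree p q h)

/-- Index type of the generators of the mixed Drinfeld–Kohno Lie algebra `dk_{m,n}`: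
pairs of distinct indices in `Fin (m+n)`, not both poles (i.e., not both `< m`). -/
def MIdx (m n : ℕ) : Type :=
  {pq : Fin (m + n) × Fin (m + n) // pq.1 ≠ pq.2 ∧ (m ≤ (pq.1 : ℕ) ∨ m ≤ (pq.2 : ℕ))}

abbrev FLmix (m n : ℕ) := FreeLieAlgebra ℚ (MIdx m n)

def tMix {m n : ℕ} (p q : Fin (m + n)) (h : p ≠ q)
    (hm : m ≤ (p : ℕ) ∨ m ≤ (q : ℕ)) : FLmix m n :=
  FreeLieAlgebra.of ℚ ⟨(p, q), h, hm⟩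

/-- The defining relations of `dk_{m,n}`: exactly the symmetry, commutation and 4T relations
of `dk_{m+n}` involving only mixed pairs. -/
def mixRels (m n : ℕ) : Set (FLmix m n) :=
  {z | ∃ (p q : Fin (m + n)) (h : p ≠ q) (hm : m ≤ (p : ℕ) ∨ m ≤ (q : ℕ)),
      z = tMix p q h hm - tMix q p h.symm hm.symm} ∪
  {z | ∃ (p q r s : Fin (m + n)) (hpq : p ≠ q) (hmpq : m ≤ (p : ℕ) ∨ m ≤ (q : ℕ))
      (hrs : r ≠ s) (hmrs : m ≤ (r : ℕ) ∨ m ≤ (s : ℕ)),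
      p ≠ r ∧ p ≠ s ∧ q ≠ r ∧ q ≠ s ∧ z = ⁅tMix p q hpq hmpq, tMix r s hrs hmrs⁆} ∪
  {z | ∃ (p q r : Fin (m + n)) (hpq : p ≠ q) (hmpq : m ≤ (p : ℕ) ∨ m ≤ (q : ℕ))
      (hqr : q ≠ r) (hmqr : m ≤ (q : ℕ) ∨ m ≤ (r : ℕ))
      (hpr : p ≠ r) (hmpr : m ≤ (p : ℕ) ∨ m ≤ (r : ℕ)),
      z = ⁅tMix p q hpq hmpq + tMix q r hqr hmqr, tMix p r hpr hmpr⁆}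

def mixIdeal (m n : ℕ) : LieIdeal ℚ (FLmix m n) :=
  LieSubmodule.lieSpan ℚ (FLmix m n) (mixRels m n)

/-- The mixed Drinfeld–Kohno Lie algebra `dk_{m,n}`. -/
abbrev dkmn (m n : ℕ) := FLmix m n ⧸ mixIdeal m n

lemma castAdd_ne_natAdd {m n : ℕ} (i : Fin m) (j : Fin n) :
    Fin.castAdd n i ≠ Fin.natAdd m j := by
  intro h
  have hv := congrArg Fin.val h
  simp only [Fin.coe_castAdd, Fin.coe_natAdd] at hv
  have := i.isLt
  omega

lemma natAdd_ne {m n : ℕ} {u v : Fin n} (h : u ≠ v) :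
    Fin.natAdd m u ≠ Fin.natAdd m v := by
  intro hh
  exact h (by
    have hv := congrArg Fin.val hh
    simp only [Fin.coe_natAdd] at hv
    exact Fin.ext (by omega))

lemma natAdd_le_left (m : ℕ) {n : ℕ} (j : Fin n) : m ≤ (Fin.natAdd m j : ℕ) := by
  simp only [Fin.coe_natAdd]; omega

/-- The generator `a_{ij}` of `dk_{m,n}` (0-indexed): `a_{ij} = t_{i(m+j)}`. -/
def aG {m n : ℕ} (i : Fin m) (j : Fin n) : dkmn m n :=
  LieSubmodule.Quotient.mk (N := mixIdeal m n)
    (tMix (Fin.castAdd n i) (Fin.natAdd m j) (castAdd_ne_natAdd i j)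
      (Or.inr (natAdd_le_left m j)))

/-- The generator `c_{ij}` of `dk_{m,n}` (0-indexed): `c_{ij} = t_{(m+i)(m+j)}`. -/
def cG {m n : ℕ} (u v : Fin n) (h : u ≠ v) : dkmn m n :=
  LieSubmodule.Quotient.mk (N := mixIdeal m n)
    (tMix (Fin.natAdd m u) (Fin.natAdd m v) (natAdd_ne h)
      (Or.inl (natAdd_le_left m u)))

/-- The Lie ideal `c` of `dk_{m,n}` generated by the `c_{ij}`. -/
def cId (m n : ℕ) : LieIdeal ℚ (dkmn m n) :=
  LieSubmodule.lieSpan ℚ (dkmn m n) {z | ∃ (u v : Fin n) (h : u ≠ v), z = cG u v h}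

/-- The Lie ideal `[c,c]`. -/
def ccId (m n : ℕ) : LieIdeal ℚ (dkmn m n) := ⁅cId m n, cId m n⁆

/-- The emergent Drinfeld–Kohno Lie algebra `edk_{m,n} = dk_{m,n}/[c,c]`. -/
abbrev edk (m n : ℕ) := dkmn m n ⧸ ccId m n

/-- Projection `dk_{m,n} → edk_{m,n}` as a function. -/
def eprojF (m n : ℕ) : dkmn m n → edk m n := LieSubmodule.Quotient.mk (N := ccId m n)

/-- Projection `dk_{m,n} → edk_{m,n}` as a `ℚ`-linear map. -/
def eproj (m n : ℕ) : dkmn m n →ₗ[ℚ] edk m n := (ccId m n).toSubmodule.mkQ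

/-- `a_{ij}` in `edk_{m,n}`. -/
def aGE {m n : ℕ} (i : Fin m) (j : Fin n) : edk m n := eprojF m n (aG i j)

/-- `c_{ij}` in `edk_{m,n}`. -/
def cGE {m n : ℕ} (u v : Fin n) (h : u ≠ v) : edk m n := eprojF m n (cG u v h)

/-- The canonical Lie algebra map `FreeLieAlgebra ℚ (Fin m) → ass_m`,
whose image is `lie_m`. -/
def toAssL (m : ℕ) : FreeLieAlgebra ℚ (Fin m) →ₗ⁅ℚ⁆ FreeAlgebra ℚ (Fin m) :=
  FreeLieAlgebra.lift ℚ (FreeAlgebra.ι ℚ)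

/-- `u ↦ u_i` (at `dk` level): the Lie algebra map with `x_p ↦ a_{pi}`. -/
def uEldk {m n : ℕ} (i : Fin n) : FreeLieAlgebra ℚ (Fin m) →ₗ⁅ℚ⁆ dkmn m n :=
  FreeLieAlgebra.lift ℚ fun p => aG p i

/-- `u ↦ u_i`: the Lie algebra map `lie_m → edk_{m,n}` with `x_p ↦ a_{pi}`. -/
def uEl {m n : ℕ} (i : Fin n) : FreeLieAlgebra ℚ (Fin m) →ₗ⁅ℚ⁆ edk m n :=
  FreeLieAlgebra.lift ℚ fun p => aGE p i

/-- Iterated bracketing `[a_{p₁ j}, [a_{p₂ j}, [… , [a_{p_d j}, ξ]…]]]`. -/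
def adWApply {m n : ℕ} (j : Fin n) : List (Fin m) → edk m n → edk m n
  | [], ξ => ξ
  | p :: t, ξ => ⁅aGE p j, adWApply j t ξ⁆


/-- `w ↦ w_{uv}`: the linear map `ass_m → edk_{m,n}` with
`1 ↦ c_{uv}` and `(x_{p₁}⋯x_{p_d}) ↦ [a_{p₁ v}, [… [a_{p_d v}, c_{uv}]…]]`. -/
def wEl {m n : ℕ} (u v : Fin n) (h : u ≠ v) : Ass m →ₗ[ℚ] edk m n :=
  liftWord fun l => adWApply v l (cGE u v h)

/-- `ad_w^{(l)}(ξ)`, linear in `w`. -/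
def adOp {m n : ℕ} (l : Fin n) (ξ : edk m n) : Ass m →ₗ[ℚ] edk m n :=
  liftWord fun lst => adWApply l lst ξ

/-- Degree-`k` part of the free Lie algebra (generators of degree 1), realized as the
preimage of the degree-`k` part of the free associative algebra under the canonical map. -/
def flHomog (X : Type) (k : ℕ) : Submodule ℚ (FreeLieAlgebra ℚ X) :=
  Submodule.comap
    (FreeLieAlgebra.lift ℚ (FreeAlgebra.ι ℚ (X := X)) :
      FreeLieAlgebra ℚ X →ₗ⁅ℚ⁆ FreeAlgebra ℚ X).toLinearMap
    (homogS X k)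

/-- Degree-`k` part of `edk_{m,n}`. -/
def edkHomog (m n : ℕ) (k : ℕ) : Submodule ℚ (edk m n) :=
  (((flHomog (MIdx m n) k).map (mixIdeal m n).toSubmodule.mkQ)).map (eproj m n)

-- Fin helper lemmas
lemma castSucc_ne_of_ne {n : ℕ} {u v : Fin n} (h : u ≠ v) :
    Fin.castSucc u ≠ Fin.castSucc v := fun hh => h (Fin.castSucc_injective n hh)

lemma succ_ne_of_ne {n : ℕ} {u v : Fin n} (h : u ≠ v) :
    Fin.succ u ≠ Fin.succ v := fun hh => h (Fin.succ_injective n hh)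

lemma castSucc_ne_last {n : ℕ} (u : Fin n) : Fin.castSucc u ≠ Fin.last n :=
  (Fin.castSucc_lt_last u).ne

lemma castSucc_ne_succ_of_le {n : ℕ} {u v : Fin n} (h : u ≤ v) :
    Fin.castSucc u ≠ Fin.succ v := by
  intro hh
  have hv := congrArg Fin.val hh
  simp only [Fin.coe_castSucc, Fin.val_succ] at hv
  have := Fin.le_def.mp h
  omega

/-- `D` is the pole coface map `δ_k : dk_{m,n} → dk_{m+1,n}`, `0 ≤ k ≤ m`
(1-indexed `k`; `k = 0` is extension on the left). -/
def IsDeltaPole (m n : ℕ) (k : ℕ) (D : dkmn m n →ₗ⁅ℚ⁆ dkmn (m + 1) n) : Prop :=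
  (∀ (i : Fin m) (j : Fin n),
     (((i : ℕ) + 1 < k) → D (aG i j) = aG (Fin.castSucc i) j) ∧
     (((i : ℕ) + 1 = k) → D (aG i j) = aG (Fin.castSucc i) j + aG (Fin.succ i) j) ∧
     ((k < (i : ℕ) + 1) → D (aG i j) = aG (Fin.succ i) j)) ∧
  (∀ (u v : Fin n) (h : u ≠ v), D (cG u v h) = cG u v h)

/-- `D` is the strand coface map `δ_{m+κ} : dk_{m,n} → dk_{m,n+1}`, `1 ≤ κ ≤ n+1`
(1-indexed strand `κ`; `κ = n+1` is extension on the right). -/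
def IsDeltaStrand (m n : ℕ) (κ : ℕ) (D : dkmn m n →ₗ⁅ℚ⁆ dkmn m (n + 1)) : Prop :=
  (∀ (i : Fin m) (j : Fin n),
     (((j : ℕ) + 1 < κ) → D (aG i j) = aG i (Fin.castSucc j)) ∧
     (((j : ℕ) + 1 = κ) → D (aG i j) = aG i (Fin.castSucc j) + aG i (Fin.succ j)) ∧
     ((κ < (j : ℕ) + 1) → D (aG i j) = aG i (Fin.succ j))) ∧
  (∀ (u v : Fin n) (h : u < v),
     (((v : ℕ) + 1 < κ) →
        D (cG u v h.ne) = cG (Fin.castSucc u) (Fin.castSucc v) (castSucc_ne_of_ne h.ne)) ∧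
     (((v : ℕ) + 1 = κ) →
        D (cG u v h.ne) = cG (Fin.castSucc u) (Fin.castSucc v) (castSucc_ne_of_ne h.ne)
          + cG (Fin.castSucc u) (Fin.succ v) (castSucc_ne_succ_of_le h.le)) ∧
     (((u : ℕ) + 1 < κ ∧ κ < (v : ℕ) + 1) →
        D (cG u v h.ne) = cG (Fin.castSucc u) (Fin.succ v) (castSucc_ne_succ_of_le h.le)) ∧
     (((u : ℕ) + 1 = κ) →
        D (cG u v h.ne) = cG (Fin.castSucc u) (Fin.succ v) (castSucc_ne_succ_of_le h.le)
          + cG (Fin.succ u) (Fin.succ v) (succ_ne_of_ne h.ne)) ∧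
     ((κ < (u : ℕ) + 1) →
        D (cG u v h.ne) = cG (Fin.succ u) (Fin.succ v) (succ_ne_of_ne h.ne)))

/-- `T` is `ϑ_{m+1} : dk_{m+1,n} → dk_{m,n+1}` (the last pole becomes the first strand). -/
def IsTheta (m n : ℕ) (T : dkmn (m + 1) n →ₗ⁅ℚ⁆ dkmn m (n + 1)) : Prop :=
  (∀ (i : Fin (m + 1)) (j : Fin n),
     (∀ hi : (i : ℕ) < m, T (aG i j) = aG ⟨i, hi⟩ (Fin.succ j)) ∧
     ((i : ℕ) = m → T (aG i j) = cG 0 (Fin.succ j) (Fin.succ_ne_zero j).symm)) ∧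
  (∀ (u v : Fin n) (h : u ≠ v), T (cG u v h) = cG (Fin.succ u) (Fin.succ v) (succ_ne_of_ne h))

/-- The coface map `d_k : dk_{m,n} → dk_{m,n+1}`, built from the data of the pole
cofaces, the strand cofaces, and `ϑ_{m+1}`. -/
def coface (m n : ℕ) (Dp : ℕ → (dkmn m n →ₗ⁅ℚ⁆ dkmn (m + 1) n))
    (Ds : ℕ → (dkmn m n →ₗ⁅ℚ⁆ dkmn m (n + 1)))
    (T : dkmn (m + 1) n →ₗ⁅ℚ⁆ dkmn m (n + 1)) (k : ℕ) :
    dkmn m n →ₗ⁅ℚ⁆ dkmn m (n + 1) :=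
  if k ≤ m then T.comp (Dp k) else Ds (k - m)

/-- The algebra map `ass_{m'+1} → ass_{m'}` with `x_p ↦ x_p` (`p < m'`) and `x_{m'} ↦ 0`. -/
def setLast0A (m' : ℕ) : Ass (m' + 1) →ₐ[ℚ] Ass m' :=
  FreeAlgebra.lift ℚ fun p : Fin (m' + 1) =>
    if h : (p : ℕ) < m' then gen ⟨p, h⟩ else 0

/-- The Lie algebra map `FreeLie (Fin (m'+1)) → FreeLie (Fin m')` setting the last
generator to `0`. -/
def flSetLast0 (m' : ℕ) : FreeLieAlgebra ℚ (Fin (m' + 1)) →ₗ⁅ℚ⁆ FreeLieAlgebra ℚ (Fin m') :=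
  FreeLieAlgebra.lift ℚ fun p : Fin (m' + 1) =>
    if h : (p : ℕ) < m' then FreeLieAlgebra.of ℚ ⟨p, h⟩ else 0

/-!
`μ_gr` obeys a twisted Leibniz rule `μ(ab) = μ(a) b + a μ(b) - Σ_i (∂_i a) x_i (∂ˡ_i b)`, where
`∂ˡ_i` is the left partial derivative (`b = ε(b) + Σ_i x_i ∂ˡ_i b`). On words this reduces to the
recursion `μ(x_a c) = x_a (μ(c) - ∂ˡ_a c)` read off from the definition of `μ_gr`. On `lie_N` the
counit `ε` vanishes and `ι = -id`, so applying `ι` to `a = Σ_i (∂_i a) x_i` gives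
`∂ˡ_i a = ι(∂_i a)`; expanding `[a, b] = ab - ba` with the Leibniz rule then yields the bracket
rule. Uniqueness follows by induction over the Lie span of the generators.
-/

section

variable {N : ℕ}

lemma wordProd_nil : wordProd ([] : List (Fin N)) = 1 := rfl

lemma wordProd_cons (a : Fin N) (t : List (Fin N)) :
    wordProd (a :: t) = gen a * wordProd t := by
  simp [wordProd]

lemma wordProd_append (l r : List (Fin N)) :
    wordProd (l ++ r) = wordProd l * wordProd r := by
  simp [wordProd]

lemma wordProd_singleton (a : Fin N) : wordProd [a] = gen a := by
  simp [wordProd]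

lemma basisFreeMonoid_apply (w : FreeMonoid (Fin N)) :
    FreeAlgebra.basisFreeMonoid ℚ (Fin N) w = wordProd w.toList := by
  simp [FreeAlgebra.basisFreeMonoid, FreeAlgebra.equivMonoidAlgebraFreeMonoid, wordProd,
    FreeMonoid.lift_apply]
  rfl

lemma liftWord_wordProd {A : Type} [AddCommGroup A] [Module ℚ A] (f : List (Fin N) → A)
    (l : List (Fin N)) : liftWord f (wordProd l) = f l := by
  rw [← FreeMonoid.toList_ofList l, ← basisFreeMonoid_apply, liftWord,
    Module.Basis.constr_basis]

lemma linearMap_ext_wordProd {A : Type} [AddCommGroup A] [Module ℚ A] {f g : Ass N →ₗ[ℚ] A}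
    (h : ∀ l, f (wordProd l) = g (wordProd l)) : f = g :=
  (FreeAlgebra.basisFreeMonoid ℚ (Fin N)).ext fun w => by
    rw [basisFreeMonoid_apply]
    exact h _

lemma linearMap_ext₂_wordProd {A : Type} [AddCommGroup A] [Module ℚ A]
    {f g : Ass N →ₗ[ℚ] Ass N →ₗ[ℚ] A}
    (h : ∀ l r, f (wordProd l) (wordProd r) = g (wordProd l) (wordProd r)) : f = g :=
  linearMap_ext_wordProd fun l => linearMap_ext_wordProd fun r => h l r

def leftPartialD (i : Fin N) : Ass N →ₗ[ℚ] Ass N :=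
  liftWord fun
    | [] => 0
    | a :: t => if a = i then wordProd t else 0

lemma leftPartialD_gen_mul (i j : Fin N) (c : Ass N) :
    leftPartialD j (gen i * c) = if i = j then c else 0 := by
  suffices h : leftPartialD j ∘ₗ LinearMap.mulLeft ℚ (gen i) =
      if i = j then LinearMap.id else 0 by
    split_ifs at h ⊢ <;> exact LinearMap.congr_fun h c
  refine linearMap_ext_wordProd fun l => ?_
  split_ifs <;> simp [← wordProd_cons, leftPartialD, liftWord_wordProd, *]

lemma muGr_wordProd (l : List (Fin N)) : muGr N (wordProd l) = muWord l :=
  liftWord_wordProd _ _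

lemma muGr_gen (i : Fin N) : muGr N (gen i) = 0 := by
  rw [← wordProd_singleton, muGr_wordProd, muWord]

lemma muGr_one : muGr N 1 = 0 := by
  rw [← wordProd_nil, muGr_wordProd, muWord]

lemma partialD_one (i : Fin N) : partialD i (1 : Ass N) = 0 := by
  rw [← wordProd_nil, partialD, liftWord_wordProd]
  rfl

lemma partialD_wordProd_concat (i : Fin N) (l : List (Fin N)) (p : Fin N) :
    partialD i (wordProd (l ++ [p])) = if p = i then wordProd l else 0 := by
  simp [partialD, liftWord_wordProd]

lemma partialD_gen (i a : Fin N) : partialD i (gen a) = if a = i then 1 else 0 := by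
  simpa [wordProd_nil, wordProd_singleton] using partialD_wordProd_concat i [] a

lemma partialD_gen_mul_wordProd (i a : Fin N) {l : List (Fin N)} (hl : l ≠ []) :
    partialD i (gen a * wordProd l) = gen a * partialD i (wordProd l) := by
  obtain ⟨l, p, rfl⟩ := (List.eq_nil_or_concat l).resolve_left hl
  rw [List.concat_eq_append, ← wordProd_cons, ← List.cons_append, partialD_wordProd_concat,
    partialD_wordProd_concat]
  split_ifs <;> simp [wordProd_cons]

lemma muGr_gen_mul (a : Fin N) (c : Ass N) :
    muGr N (gen a * c) = gen a * (muGr N c - leftPartialD a c) := by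
  suffices h : muGr N ∘ₗ LinearMap.mulLeft ℚ (gen a) =
      LinearMap.mulLeft ℚ (gen a) ∘ₗ (muGr N - leftPartialD a) from LinearMap.congr_fun h c
  refine linearMap_ext_wordProd fun l => ?_
  rcases l with _ | ⟨b, t⟩
  · simp [← wordProd_cons, muGr_wordProd, muWord, leftPartialD, liftWord_wordProd]
  · simp only [LinearMap.comp_apply, LinearMap.mulLeft_apply, LinearMap.sub_apply,
      ← wordProd_cons, muGr_wordProd, muWord, leftPartialD, liftWord_wordProd]
    rcases eq_or_ne a b with rfl | hab
    · simp [wordProd_cons, mul_sub]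
      abel
    · simp [hab, hab.symm]

lemma muGr_wordProd_mul (l : List (Fin N)) (b : Ass N) :
    muGr N (wordProd l * b) = muGr N (wordProd l) * b + wordProd l * muGr N b
      - ∑ i, partialD i (wordProd l) * gen i * leftPartialD i b := by
  induction l with
  | nil => simp [wordProd_nil, muGr_one, partialD_one]
  | cons a t ih =>
    rcases t with _ | ⟨c, t⟩
    · simp [wordProd_singleton, muGr_gen_mul, muGr_gen, partialD_gen, mul_sub]
    · have hne : c :: t ≠ [] := List.cons_ne_nil c t
      simp only [wordProd_cons a, mul_assoc, muGr_gen_mul, ih, partialD_gen_mul_wordProd _ a hne]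
      simp only [wordProd_cons c, mul_assoc, leftPartialD_gen_mul]
      split_ifs
      · simp only [mul_add, mul_sub, sub_mul, Finset.mul_sum]
        abel
      · simp only [mul_add, mul_sub, sub_zero, Finset.mul_sum]

lemma muGr_mul (a b : Ass N) :
    muGr N (a * b) = muGr N a * b + a * muGr N b
      - ∑ i, partialD i a * gen i * leftPartialD i b := by
  suffices h : muGr N ∘ₗ LinearMap.mulRight ℚ b =
      LinearMap.mulRight ℚ b ∘ₗ muGr N + LinearMap.mulRight ℚ (muGr N b)
        - ∑ i, LinearMap.mulRight ℚ (gen i * leftPartialD i b) ∘ₗ partialD i by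
    simpa [mul_assoc] using LinearMap.congr_fun h a
  refine linearMap_ext_wordProd fun l => ?_
  simpa [mul_assoc] using muGr_wordProd_mul l b

lemma iotaMap_wordProd (l : List (Fin N)) :
    iotaMap N (wordProd l) = ((-1 : ℚ) ^ l.length) • wordProd l.reverse :=
  liftWord_wordProd _ _

lemma iotaMap_gen (i : Fin N) : iotaMap N (gen i) = -gen i := by
  simp [← wordProd_singleton, iotaMap_wordProd]

lemma iotaMap_mul (a b : Ass N) : iotaMap N (a * b) = iotaMap N b * iotaMap N a := by
  suffices h : (LinearMap.mul ℚ (Ass N)).compr₂ (iotaMap N) =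
      ((LinearMap.mul ℚ (Ass N)).flip ∘ₗ iotaMap N).compl₂ (iotaMap N) by
    simpa using LinearMap.congr_fun₂ h a b
  refine linearMap_ext₂_wordProd fun l r => ?_
  simp only [LinearMap.compr₂_apply, LinearMap.compl₂_apply, LinearMap.comp_apply,
    LinearMap.flip_apply, LinearMap.mul_apply', ← wordProd_append, iotaMap_wordProd,
    List.reverse_append, List.length_append, smul_mul_smul_comm, pow_add, mul_comm]

lemma algebraMapInv_gen (i : Fin N) : FreeAlgebra.algebraMapInv (gen i) = (0 : ℚ) := by
  simp [FreeAlgebra.algebraMapInv, gen]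

lemma sum_partialD_mul_gen (a : Ass N) :
    ∑ i, partialD i a * gen i = a - algebraMap ℚ (Ass N) (FreeAlgebra.algebraMapInv a) := by
  suffices h : ∑ i, LinearMap.mulRight ℚ (gen i) ∘ₗ partialD i =
      LinearMap.id - Algebra.linearMap ℚ (Ass N) ∘ₗ FreeAlgebra.algebraMapInv.toLinearMap by
    simpa using LinearMap.congr_fun h a
  refine linearMap_ext_wordProd fun l => ?_
  induction l using List.reverseRecOn with
  | nil => simp [wordProd_nil, partialD_one]
  | append_singleton l p _ =>
    simp only [LinearMap.sum_apply, LinearMap.comp_apply, LinearMap.mulRight_apply,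
      partialD_wordProd_concat]
    simp [wordProd_append, wordProd_singleton, algebraMapInv_gen]

lemma algebraMapInv_of_mem_lieN {a : Ass N} (ha : a ∈ lieN N) :
    FreeAlgebra.algebraMapInv a = 0 := by
  induction ha using LieSubalgebra.lieSpan_induction with
  | mem x hx => obtain ⟨i, rfl⟩ := hx; exact algebraMapInv_gen i
  | zero => simp
  | add x y _ _ hx hy => simp [hx, hy]
  | smul r x _ hx => simp [hx]
  | lie x y _ _ hx hy => simp [Ring.lie_def, hx, hy]

lemma iotaMap_of_mem_lieN {a : Ass N} (ha : a ∈ lieN N) : iotaMap N a = -a := by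
  induction ha using LieSubalgebra.lieSpan_induction with
  | mem x hx => obtain ⟨i, rfl⟩ := hx; exact iotaMap_gen i
  | zero => simp
  | add x y _ _ hx hy => rw [map_add, hx, hy, neg_add]
  | smul r x _ hx => rw [map_smul, hx, smul_neg]
  | lie x y _ _ hx hy => simp [Ring.lie_def, iotaMap_mul, hx, hy]

lemma leftPartialD_eq_iotaMap_partialD {a : Ass N} (ha : a ∈ lieN N) (j : Fin N) :
    leftPartialD j a = iotaMap N (partialD j a) := by
  have hright : ∑ i, partialD i a * gen i = a := by
    simp [sum_partialD_mul_gen, algebraMapInv_of_mem_lieN ha]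
  have hleft : ∑ i, gen i * iotaMap N (partialD i a) = a := by
    simpa [iotaMap_mul, iotaMap_gen, iotaMap_of_mem_lieN ha] using congr(iotaMap N $hright)
  calc leftPartialD j a = leftPartialD j (∑ i, gen i * iotaMap N (partialD i a)) := by
        rw [hleft]
    _ = iotaMap N (partialD j a) := by simp [leftPartialD_gen_mul]

def muGrBracketCorrection (a b : Ass N) : Ass N :=
  ∑ i, (partialD i b * gen i * iotaMap N (partialD i a) -
    partialD i a * gen i * iotaMap N (partialD i b))

lemma muGr_lie {a b : Ass N} (ha : a ∈ lieN N) (hb : b ∈ lieN N) :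
    muGr N ⁅a, b⁆ = ⁅muGr N a, b⁆ + ⁅a, muGr N b⁆ + muGrBracketCorrection a b := by
  simp only [Ring.lie_def, map_sub, muGr_mul, leftPartialD_eq_iotaMap_partialD ha,
    leftPartialD_eq_iotaMap_partialD hb, muGrBracketCorrection, Finset.sum_sub_distrib]
  abel

lemma eq_muGr_of_map_lie (F : lieN N →ₗ[ℚ] Ass N) (hgen : ∀ i, F (genL N i) = 0)
    (hlie : ∀ a b : lieN N,
      F ⁅a, b⁆ = ⁅F a, (b : Ass N)⁆ + ⁅(a : Ass N), F b⁆ + muGrBracketCorrection (a : Ass N) b)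
    (a : lieN N) : F a = muGr N a := by
  obtain ⟨a, ha⟩ := a
  induction ha using LieSubalgebra.lieSpan_induction with
  | mem x hx => obtain ⟨i, rfl⟩ := hx; exact (hgen i).trans (muGr_gen i).symm
  | zero => exact (map_zero F).trans (map_zero (muGr N)).symm
  | add x y hx hy ihx ihy =>
    show F (⟨x, hx⟩ + ⟨y, hy⟩) = muGr N (x + y)
    rw [map_add, ihx, ihy, map_add]
  | smul r x hx ihx =>
    show F (r • ⟨x, hx⟩) = muGr N (r • x)
    rw [map_smul, ihx, map_smul]
  | lie x y hx hy ihx ihy =>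
    show F ⁅(⟨x, hx⟩ : lieN N), ⟨y, hy⟩⁆ = muGr N ⁅x, y⁆
    rw [hlie, ihx, ihy, muGr_lie hx hy]

end

/-- `μ_gr` vanishes on generators, satisfies the recursion on brackets,
and its restriction to `lie_n` is the unique linear map with these properties. -/
theorem statement14 (n : ℕ) :
    (∀ i : Fin n, muGr n (gen i) = 0) ∧
    (∀ a b : Ass n, a ∈ lieN n → b ∈ lieN n →
      muGr n ⁅a, b⁆ = ⁅muGr n a, b⁆ + ⁅a, muGr n b⁆ +
        ∑ i, (partialD i b * gen i * iotaMap n (partialD i a) -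
          partialD i a * gen i * iotaMap n (partialD i b))) ∧
    (∀ F : ↥(lieN n) →ₗ[ℚ] Ass n,
      (∀ i : Fin n, F (genL n i) = 0) →
      (∀ a b : ↥(lieN n),
        F ⁅a, b⁆ = ⁅F a, (b : Ass n)⁆ + ⁅(a : Ass n), F b⁆ +
          ∑ i, (partialD i (b : Ass n) * gen i * iotaMap n (partialD i (a : Ass n)) -
            partialD i (a : Ass n) * gen i * iotaMap n (partialD i (b : Ass n)))) →
      ∀ a : ↥(lieN n), F a = muGr n (a : Ass n)) :=
  ⟨muGr_gen, fun _ _ ha hb => muGr_lie ha hb, eq_muGr_of_map_lie⟩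

end
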